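/- arXiv:1712.09510 — 3 statements merged into one kernel-verified Lean document; each statement's English description precedes it below -/
import Mathlib

section
/- Consider the system ẋ₁ = f₁(x), ẏ = By + g(x) on ℝⁿ (x = (x₁,y), y ∈ ℝ^{n−1}) with f₁, g analytic, f₁(x), g(x) = O(‖x‖²), f₁(x₁,0) ≡ 0 and g(x₁,0) ≡ 0, and B = diag(λ₂,...,λₙ) with (λ₂,...,λₙ) non-resonant. Then for every m ≥ 1 there exists a formal power series H(x) = x₁^m + Σ_{ℓ≥1} H_{m+ℓ}(x), with H_{m+ℓ} homogeneous polynomials of degree m+ℓ, which is a formal first integral: ⟨∇H(x), (f₁(x), By + g(x))⟩ = 0 as a formal power series identity. -/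
open MvPolynomial Finsupp

namespace Stmt12Aux
variable {n : ℕ}

noncomputable def eig (lam : Fin n → ℂ) (a : Fin n →₀ ℕ) : ℂ := ∑ i, (a i : ℂ) * lam i

noncomputable def Lop (lam : Fin n → ℂ) : MvPolynomial (Fin n) ℂ →ₗ[ℂ] MvPolynomial (Fin n) ℂ :=
  ∑ j, lam j • ((LinearMap.mulLeft ℂ (X j)).comp (pderiv j).toLinearMap)

lemma Lop_apply (lam : Fin n → ℂ) (P : MvPolynomial (Fin n) ℂ) :
    Lop lam P = ∑ j, lam j • (X j * pderiv j P) := by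
  simp [Lop, LinearMap.sum_apply]

lemma single_add_sub {a : Fin n →₀ ℕ} {j : Fin n} (h : a j ≠ 0) :
    Finsupp.single j 1 + (a - Finsupp.single j 1) = a := by
  ext i
  by_cases hij : i = j
  · subst hij; simp [Finsupp.single_apply]; omega
  · have : j ≠ i := fun hh => hij hh.symm
    simp [Finsupp.single_apply, this]

lemma X_mul_pderiv_monomial (a : Fin n →₀ ℕ) (c : ℂ) (j : Fin n) :
    X j * pderiv j (monomial a c) = (a j : ℂ) • monomial a c := by
  rw [pderiv_monomial]
  by_cases h : a j = 0
  · simp [h]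
  · rw [X, monomial_mul, single_add_sub h, smul_monomial]
    simp [smul_eq_mul]; ring_nf

lemma Lop_monomial (lam : Fin n → ℂ) (a : Fin n →₀ ℕ) (c : ℂ) :
    Lop lam (monomial a c) = eig lam a • monomial a c := by
  rw [Lop_apply, eig, Finset.sum_smul]
  refine Finset.sum_congr rfl fun j _ => ?_
  rw [X_mul_pderiv_monomial, smul_smul, mul_comm]

noncomputable def solveP (lam : Fin n → ℂ) (Q : MvPolynomial (Fin n) ℂ) : MvPolynomial (Fin n) ℂ :=
  ∑ a ∈ Q.support, monomial a ((eig lam a)⁻¹ * Q.coeff a)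

lemma Lop_solveP (lam : Fin n → ℂ) (Q : MvPolynomial (Fin n) ℂ)
    (h : ∀ a ∈ Q.support, eig lam a ≠ 0) : Lop lam (solveP lam Q) = Q := by
  conv_rhs => rw [Q.as_sum]
  rw [solveP, map_sum]
  refine Finset.sum_congr rfl fun a ha => ?_
  rw [Lop_monomial, smul_monomial, smul_eq_mul, ← mul_assoc,
    mul_inv_cancel₀ (h a ha), one_mul]

lemma solveP_isHomogeneous (lam : Fin n → ℂ) {Q : MvPolynomial (Fin n) ℂ} {d : ℕ}
    (hQ : Q.IsHomogeneous d) : (solveP lam Q).IsHomogeneous d := by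
  apply IsHomogeneous.sum
  intro a ha
  refine isHomogeneous_monomial _ ?_
  rw [Finsupp.degree_eq_weight_one]
  exact hQ (MvPolynomial.mem_support_iff.mp ha)

lemma isHomogeneous_pderiv {P : MvPolynomial (Fin n) ℂ} {d : ℕ}
    (hP : P.IsHomogeneous d) (i : Fin n) : (pderiv i P).IsHomogeneous (d - 1) := by
  conv_lhs => rw [P.as_sum]
  rw [map_sum]
  apply IsHomogeneous.sum
  intro a ha
  rw [pderiv_monomial]
  by_cases h : a i = 0
  · rw [h]; push_cast; rw [mul_zero, map_zero]; exact isHomogeneous_zero _ _ _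
  · apply isHomogeneous_monomial
    have hd : a.degree = d := by
      rw [Finsupp.degree_eq_weight_one]
      exact hP (MvPolynomial.mem_support_iff.mp ha)
    have h2 : (Finsupp.single i 1 + (a - Finsupp.single i 1)).degree = d := by
      rw [single_add_sub h, hd]
    rw [Finsupp.degree_eq_weight_one, map_add, ← Finsupp.degree_eq_weight_one] at h2
    have h3 : (Finsupp.single i 1).degree = 1 := by
      exact Finsupp.degree_single i 1
    omega

lemma coeff_mul_single (i0 : Fin n) (P Q : MvPolynomial (Fin n) ℂ)
    (hQ : ∀ p, Q.coeff (Finsupp.single i0 p) = 0) (p : ℕ) :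
    (P * Q).coeff (Finsupp.single i0 p) = 0 := by
  rw [coeff_mul]
  apply Finset.sum_eq_zero
  rintro ⟨a, b⟩ hab
  rw [Finset.HasAntidiagonal.mem_antidiagonal] at hab
  have hb : b = Finsupp.single i0 (b i0) := by
    ext j
    by_cases hj : j = i0
    · subst hj; simp
    · have := DFunLike.congr_fun hab j
      simp only [Finsupp.add_apply, Finsupp.single_apply] at this ⊢
      have hji0 : ¬ i0 = j := fun hh => hj hh.symm
      simp only [if_neg hji0] at this ⊢
      omega
  rw [hb, hQ, mul_zero]

lemma eig_single_eq (lam : Fin n → ℂ) (i0 : Fin n) (p : ℕ) :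
    eig lam (Finsupp.single i0 p) = (p : ℂ) * lam i0 := by
  rw [eig]
  rw [Finset.sum_eq_single i0]
  · simp
  · intro i _ hi
    simp [Finsupp.single_apply, Ne.symm hi]
  · simp

lemma eig_eq_zero_single (lam : Fin n → ℂ) (i0 : Fin n) (hlam0 : lam i0 = 0)
    (hres : ∀ ms : Fin n → ℕ, ms i0 = 0 → 1 ≤ ∑ i, ms i → ∑ i, (ms i : ℂ) * lam i ≠ 0)
    (a : Fin n →₀ ℕ) (ha : eig lam a = 0) : a = Finsupp.single i0 (a i0) := by
  by_contra hne
  have hj : ∃ j, j ≠ i0 ∧ a j ≠ 0 := by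
    by_contra hc
    push_neg at hc
    apply hne
    ext j
    by_cases hji : j = i0
    · subst hji; simp
    · rw [hc j hji]
      simp [Finsupp.single_apply, Ne.symm hji]
  obtain ⟨j, hji, haj⟩ := hj
  set ms : Fin n → ℕ := fun i => if i = i0 then 0 else a i with hms
  have h1 : ms i0 = 0 := by simp [hms]
  have h2 : 1 ≤ ∑ i, ms i := by
    have : ms j ≤ ∑ i, ms i :=
      Finset.single_le_sum (fun i _ => Nat.zero_le _) (Finset.mem_univ j)
    have hmsj : ms j = a j := by simp [hms, hji]
    omega
  have h3 : ∑ i, (ms i : ℂ) * lam i = eig lam a := by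
    rw [eig]
    refine Finset.sum_congr rfl fun i _ => ?_
    by_cases hii : i = i0
    · subst hii; simp [hms, hlam0]
    · simp [hms, hii]
  exact hres ms h1 h2 (h3.trans ha)

variable (m : ℕ) (i0 : Fin n) (lam : Fin n → ℂ)
  (f1 : ℕ → MvPolynomial (Fin n) ℂ) (g : ℕ → Fin n → MvPolynomial (Fin n) ℂ)

noncomputable def Hrec : ℕ → MvPolynomial (Fin n) ℂ
  | d =>
    if d ≤ m then (if d = m then X i0 ^ m else 0)
    else solveP lam (-(∑ e ∈ (Finset.range d).attach,
        (pderiv i0 (Hrec e.1) * f1 (d + 1 - e.1)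
          + ∑ j, pderiv j (Hrec e.1) * g (d + 1 - e.1) j)))
  termination_by d => d
  decreasing_by exact Finset.mem_range.mp e.2

noncomputable def Nsum (D : ℕ) : MvPolynomial (Fin n) ℂ :=
  ∑ e ∈ Finset.range D,
    (pderiv i0 (Hrec m i0 lam f1 g e) * f1 (D + 1 - e)
      + ∑ j, pderiv j (Hrec m i0 lam f1 g e) * g (D + 1 - e) j)

lemma Hrec_eq (d : ℕ) : Hrec m i0 lam f1 g d =
    if d ≤ m then (if d = m then X i0 ^ m else 0)
    else solveP lam (-(Nsum m i0 lam f1 g d)) := by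
  rw [Hrec, Nsum, ← Finset.sum_attach (Finset.range d)]

lemma Hrec_low (d : ℕ) (h1 : d ≤ m) (h2 : d ≠ m) : Hrec m i0 lam f1 g d = 0 := by
  rw [Hrec_eq, if_pos h1, if_neg h2]

lemma Nsum_coeff_single
    (hf1van : ∀ s p, (f1 s).coeff (Finsupp.single i0 p) = 0)
    (hgvan : ∀ s j p, (g s j).coeff (Finsupp.single i0 p) = 0)
    (D p : ℕ) : (Nsum m i0 lam f1 g D).coeff (Finsupp.single i0 p) = 0 := by
  rw [Nsum, MvPolynomial.coeff_sum]
  apply Finset.sum_eq_zero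
  intro e _
  rw [coeff_add, coeff_mul_single _ _ _ (hf1van _) p, MvPolynomial.coeff_sum]
  rw [zero_add]
  apply Finset.sum_eq_zero
  intro j _
  exact coeff_mul_single _ _ _ (hgvan _ j) p

lemma Hrec_isHomogeneous (hm : 1 ≤ m)
    (hf1h : ∀ s, (f1 s).IsHomogeneous s) (hgh : ∀ s j, (g s j).IsHomogeneous s)
    (d : ℕ) : (Hrec m i0 lam f1 g d).IsHomogeneous d := by
  induction d using Nat.strong_induction_on with
  | _ d ih =>
    rw [Hrec_eq]
    split_ifs with h1 h2
    · subst h2; exact isHomogeneous_X_pow i0 _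
    · exact isHomogeneous_zero _ _ _
    · apply solveP_isHomogeneous
      apply MvPolynomial.IsHomogeneous.neg
      apply IsHomogeneous.sum
      intro e he
      have hed : e < d := Finset.mem_range.mp he
      have key : ∀ (j : Fin n) (Q : MvPolynomial (Fin n) ℂ),
          Q.IsHomogeneous (d + 1 - e) →
          (pderiv j (Hrec m i0 lam f1 g e) * Q).IsHomogeneous d := by
        intro j Q hQ
        by_cases he0 : e = 0
        · subst he0
          rw [Hrec_low m i0 lam f1 g 0 (by omega) (by omega), map_zero, zero_mul]
          exact isHomogeneous_zero _ _ _
        · have hmul := (isHomogeneous_pderiv (ih e hed) j).mul hQ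
          have : e - 1 + (d + 1 - e) = d := by omega
          rwa [this] at hmul
      exact (key i0 _ (hf1h _)).add (IsHomogeneous.sum _ _ _ fun j _ => key j _ (hgh _ j))

lemma Lop_Hrec_add_Nsum (hm : 1 ≤ m) (hlam0 : lam i0 = 0)
    (hres : ∀ ms : Fin n → ℕ, ms i0 = 0 → 1 ≤ ∑ i, ms i → ∑ i, (ms i : ℂ) * lam i ≠ 0)
    (hf1van : ∀ s p, (f1 s).coeff (Finsupp.single i0 p) = 0)
    (hgvan : ∀ s j p, (g s j).coeff (Finsupp.single i0 p) = 0)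
    (D : ℕ) : Lop lam (Hrec m i0 lam f1 g D) + Nsum m i0 lam f1 g D = 0 := by
  by_cases hD : D ≤ m
  · have hN : Nsum m i0 lam f1 g D = 0 := by
      rw [Nsum]
      apply Finset.sum_eq_zero
      intro e he
      have hed : e < D := Finset.mem_range.mp he
      rw [Hrec_low m i0 lam f1 g e (by omega) (by omega), map_zero, zero_mul, zero_add]
      apply Finset.sum_eq_zero
      intro j _
      rw [map_zero, zero_mul]
    rw [hN, add_zero]
    by_cases hDm : D = m
    · subst hDm
      rw [Hrec_eq, if_pos le_rfl, if_pos rfl, X_pow_eq_monomial, Lop_monomial,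
        eig_single_eq, hlam0, mul_zero, zero_smul]
    · rw [Hrec_low m i0 lam f1 g D hD hDm, map_zero]
  · rw [Hrec_eq, if_neg hD, Lop_solveP, neg_add_cancel]
    intro a ha
    intro heig
    rw [MvPolynomial.mem_support_iff] at ha
    apply ha
    rw [eig_eq_zero_single lam i0 hlam0 hres a heig, coeff_neg,
      Nsum_coeff_single m i0 lam f1 g hf1van hgvan, neg_zero]

end Stmt12Aux

open Stmt12Aux in
/-- for the system ẋ₁ = f₁(x), ẏ = By + g(x) with B =
diag(λ₂,…,λₙ) non-resonant and f₁, g analytic of order ≥ 2 vanishing on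
y = 0, for every m ≥ 1 there is a formal first integral
H = x₁^m + Σ_{ℓ≥1} H_{m+ℓ}, the Lie-derivative identity holding in each
homogeneous degree.  Here index 0 stands for x₁; f1 s and g s j are the
degree-s homogeneous Taylor terms of f₁ and of the j-th component of g. -/
theorem stmt12 (n m : ℕ) (hn : 2 ≤ n) (hm : 1 ≤ m)
    (lam : Fin n → ℂ) (hlam0 : lam ⟨0, by omega⟩ = 0)
    (hres : ∀ ms : Fin n → ℕ, ms ⟨0, by omega⟩ = 0 → 1 ≤ ∑ i, ms i →
      ∑ i, (ms i : ℂ) * lam i ≠ 0)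
    (f1 : ℕ → MvPolynomial (Fin n) ℂ)
    (g : ℕ → Fin n → MvPolynomial (Fin n) ℂ)
    (hf1h : ∀ s, (f1 s).IsHomogeneous s)
    (hgh : ∀ s j, (g s j).IsHomogeneous s)
    -- f₁ and g are O(‖x‖²)
    (hf1low : f1 0 = 0 ∧ f1 1 = 0) (hglow : ∀ j, g 0 j = 0 ∧ g 1 j = 0)
    -- g has no x₁-component
    (hg0 : ∀ s, g s ⟨0, by omega⟩ = 0)
    -- f₁(x₁,0) ≡ 0 and g(x₁,0) ≡ 0
    (hf1van : ∀ s p, (f1 s).coeff (Finsupp.single ⟨0, by omega⟩ p) = 0)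
    (hgvan : ∀ s j p, (g s j).coeff (Finsupp.single ⟨0, by omega⟩ p) = 0) :
    ∃ H : ℕ → MvPolynomial (Fin n) ℂ,
      (∀ d, (H d).IsHomogeneous d) ∧
      H m = (X ⟨0, by omega⟩) ^ m ∧ (∀ d < m, H d = 0) ∧
      -- formal first integral: each homogeneous degree D of
      -- ⟨∇H, (f₁, By + g)⟩ vanishes
      ∀ D : ℕ, ∑ d ∈ Finset.range (D + 2),
          (pderiv (⟨0, by omega⟩ : Fin n) (H d) * f1 (D + 1 - d)
            + ∑ j : Fin n, pderiv j (H d) *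
                ((if D + 1 - d = 1 then lam j • X j else 0) + g (D + 1 - d) j))
        = 0 := by
  have hn0 : 0 < n := by omega
  set i0 : Fin n := ⟨0, hn0⟩ with hi0
  have hg0' : ∀ j, g 0 j = 0 := fun j => (hglow j).1
  have hg1' : ∀ j, g 1 j = 0 := fun j => (hglow j).2
  refine ⟨Hrec m i0 lam f1 g,
    Hrec_isHomogeneous m i0 lam f1 g hm hf1h hgh, ?_, ?_, ?_⟩
  · rw [Hrec_eq, if_pos le_rfl, if_pos rfl]
  · intro d hd
    exact Hrec_low m i0 lam f1 g d (by omega) (by omega)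
  · intro D
    have key := Lop_Hrec_add_Nsum m i0 lam f1 g hm hlam0 hres hf1van hgvan D
    have e1 : D + 1 - (D + 1) = 0 := by omega
    have e2 : D + 1 - D = 1 := by omega
    rw [Finset.sum_range_succ, Finset.sum_range_succ]
    rw [e1, e2]
    simp only [hf1low.1, hf1low.2, hg0', hg1', mul_zero, zero_mul, add_zero, zero_add,
      Finset.sum_const_zero, eq_self_iff_true, if_true, one_ne_zero,
      if_neg (by omega : ¬(0 : ℕ) = 1)]
    have hL : (∑ j, pderiv j (Hrec m i0 lam f1 g D) * (lam j • X j))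
        = Lop lam (Hrec m i0 lam f1 g D) := by
      rw [Lop_apply]
      refine Finset.sum_congr rfl fun j _ => ?_
      rw [mul_comm, smul_mul_assoc]
    have hN : (∑ d ∈ Finset.range D,
        (pderiv i0 (Hrec m i0 lam f1 g d) * f1 (D + 1 - d)
          + ∑ j : Fin n, pderiv j (Hrec m i0 lam f1 g d) *
              ((if D + 1 - d = 1 then lam j • X j else 0) + g (D + 1 - d) j)))
        = Nsum m i0 lam f1 g D := by
      rw [Nsum]
      refine Finset.sum_congr rfl fun d hd => ?_
      have hdD : d < D := Finset.mem_range.mp hd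
      have hz : ∀ j : Fin n,
          (if D + 1 - d = 1 then lam j • X j else (0 : MvPolynomial (Fin n) ℂ)) = 0 :=
        fun j => if_neg (by omega)
      simp only [hz, zero_add]
    rw [hN, hL, add_comm]
    exact key
end

section
/- If a homogeneous polynomial H_ℓ(u₁, v) of degree ℓ in variables (u₁, v) ∈ ℝ × ℝ^{n−1} satisfies ⟨∂_v H_ℓ(u), C v⟩ ≡ 0 where C is an (n−1)×(n−1) matrix whose eigenvalues (λ₂,...,λₙ) are non-resonant, then H_ℓ is independent of v, i.e. H_ℓ(u₁,v) = a·u₁^ℓ for some constant a. -/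
/-!
Over `ℂ` the block of `C` acting on `v` is triangularizable; in the adapted coordinates, which
fix `u₁`, the field becomes `Σ_j (Σ_{i ≥ j} T_ji x_i) ∂_j` with `T` upper triangular, with zero
first row, and with diagonal `0, λ₂, …, λₙ` up to order. The coefficient of `x^m` in its image
is `(Σ_j m_j T_jj) · coeff_m` plus coefficients at monomials obtained from `m` by moving one unit
of exponent to a smaller index. By induction on the weight `Σ_j j · m_j`, every monomial of a
kernel element that involves some `v`-variable has a vanishing coefficient, since non-resonance
makes `Σ_j m_j T_jj ≠ 0`. So the kernel consists of polynomials in `u₁`, and homogeneity leaves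
`a u₁^ℓ`.
-/

open MvPolynomial Matrix

def NonResonant {ι K : Type*} [Fintype ι] [Semiring K] (μ : ι → K) : Prop :=
  ∀ m : ι → ℕ, m ≠ 0 → ∑ i, (m i : K) * μ i ≠ 0

theorem NonResonant.comp {ι κ K : Type*} [Fintype ι] [Fintype κ] [DecidableEq ι] [Semiring K]
    {μ : ι → K} (hμ : NonResonant μ) (ψ : κ → ι) : NonResonant (μ ∘ ψ) := by
  intro m hm
  set ms : ι → ℕ := fun i => ∑ a with ψ a = i, m a
  have hsum : ∑ a, (m a : K) * (μ ∘ ψ) a = ∑ i, (ms i : K) * μ i := by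
    rw [← Finset.sum_fiberwise Finset.univ ψ]
    refine Finset.sum_congr rfl fun i _ => ?_
    rw [Nat.cast_sum, Finset.sum_mul]
    exact Finset.sum_congr rfl fun a ha => by
      rw [Function.comp_apply, (Finset.mem_filter.mp ha).2]
  obtain ⟨a, ha : m a ≠ 0⟩ := Function.ne_iff.mp hm
  have hle : m a ≤ ms (ψ a) := Finset.single_le_sum (fun _ _ => Nat.zero_le _) (by simp)
  have hms : ms ≠ 0 :=
    Function.ne_iff.mpr ⟨ψ a, fun h => by simp only [Pi.zero_apply] at h; omega⟩
  rw [hsum]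
  exact hμ ms hms

theorem nonResonant_succ {K : Type*} [Semiring K] {k : ℕ} {lam : Fin (k + 1) → K}
    (h : ∀ ms : Fin (k + 1) → ℕ, ms 0 = 0 → 1 ≤ ∑ i, ms i → ∑ i, (ms i : K) * lam i ≠ 0) :
    NonResonant fun b : Fin k => lam b.succ := by
  intro m hm
  obtain ⟨a, ha : m a ≠ 0⟩ := Function.ne_iff.mp hm
  have hsum : 1 ≤ ∑ i, (Fin.cons 0 m : Fin (k + 1) → ℕ) i := by
    rw [Fin.sum_univ_succ]
    exact le_add_left (le_trans (Nat.one_le_iff_ne_zero.mpr ha)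
      (Finset.single_le_sum (fun _ _ => Nat.zero_le _) (Finset.mem_univ a)))
  simpa [Fin.sum_univ_succ] using h (Fin.cons 0 m) rfl hsum

namespace Matrix

section Semiring

variable {K : Type*} [Semiring K] {k : ℕ}

/-- The block diagonal matrix `diag(1, R)`. -/
def blockDiagOne : Matrix (Fin k) (Fin k) K →* Matrix (Fin (k + 1)) (Fin (k + 1)) K where
  toFun R := of (Fin.cons (Pi.single 0 1) fun a => Fin.cons 0 (R a))
  map_one' := by
    ext i j
    cases i using Fin.cases <;> cases j using Fin.cases <;>
      simp [one_apply, (Fin.succ_ne_zero _).symm]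
  map_mul' R R' := by
    ext i j
    cases i using Fin.cases <;> cases j using Fin.cases <;>
      simp [mul_apply, Fin.sum_univ_succ, Pi.single_apply]

variable (R : Matrix (Fin k) (Fin k) K) (a b : Fin k)

theorem blockDiagOne_zero : blockDiagOne R 0 = Pi.single 0 1 := rfl

@[simp] theorem blockDiagOne_zero_succ : blockDiagOne R 0 b.succ = 0 := rfl

@[simp] theorem blockDiagOne_succ_zero : blockDiagOne R a.succ 0 = 0 := rfl

@[simp] theorem blockDiagOne_succ_succ : blockDiagOne R a.succ b.succ = R a b := rfl

variable {R a b}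

theorem isUpperTriangular_blockDiagOne_mul_mul {M : Matrix (Fin (k + 1)) (Fin (k + 1)) K}
    {R' : Matrix (Fin k) (Fin k) K} (hcol : ∀ a : Fin k, M a.succ 0 = 0)
    (h : (R' * M.submatrix Fin.succ Fin.succ * R).IsUpperTriangular) :
    (blockDiagOne R' * M * blockDiagOne R).IsUpperTriangular := by
  intro i j hji
  obtain ⟨a, rfl⟩ :=
    Fin.exists_succ_eq.mpr (Fin.pos_iff_ne_zero.mp (lt_of_le_of_lt j.zero_le hji))
  cases j using Fin.cases with
  | zero => simp [mul_apply, Fin.sum_univ_succ, hcol]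
  | succ b =>
    have := h (show b < a from Fin.succ_lt_succ_iff.mp hji)
    simpa [mul_apply, Fin.sum_univ_succ, Finset.sum_mul] using this

end Semiring

variable {K : Type*} [Field K] {k : ℕ}

theorem exists_units_mulVec_single_eq {v : Fin (k + 1) → K} (hv : v ≠ 0) :
    ∃ S : (Matrix (Fin (k + 1)) (Fin (k + 1)) K)ˣ, S.val *ᵥ Pi.single 0 1 = v := by
  obtain ⟨p, hp : v p ≠ 0⟩ := Function.ne_iff.mp hv
  let S := ((1 : Matrix (Fin (k + 1)) (Fin (k + 1)) K).updateCol p v).submatrix id (Equiv.swap 0 p)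
  have hdet : S.det = Equiv.Perm.sign (Equiv.swap 0 p) * v p := by
    rw [det_permute', ← cramer_apply, cramer_one]
    rfl
  have hS : IsUnit S := (isUnit_iff_isUnit_det S).mpr <| by
    rw [hdet]
    exact (Units.isUnit _).map (Int.castRingHom K) |>.mul hp.isUnit
  refine ⟨hS.unit, funext fun i => ?_⟩
  simp [S]

theorem exists_isUpperTriangular_units_conj [IsAlgClosed K] :
    ∀ {k : ℕ} (A : Matrix (Fin k) (Fin k) K),
      ∃ P : (Matrix (Fin k) (Fin k) K)ˣ, (P⁻¹.val * A * P.val).IsUpperTriangular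
  | 0, _ => ⟨1, fun {i} => i.elim0⟩
  | k + 1, A => by
    obtain ⟨μ, hμ⟩ := Module.End.exists_eigenvalue (toLin' A)
    obtain ⟨v, hv⟩ := hμ.exists_hasEigenvector
    obtain ⟨S, hSv⟩ := exists_units_mulVec_single_eq hv.2
    set A₁ := S⁻¹.val * A * S.val
    have hcol : ∀ a : Fin k, A₁ a.succ 0 = 0 := by
      have hA₁ : A₁ *ᵥ Pi.single 0 1 = μ • Pi.single 0 1 := by
        have hAv : A *ᵥ v = μ • v := by simpa using hv.apply_eq_smul
        rw [← mulVec_mulVec, hSv, ← mulVec_mulVec, hAv, mulVec_smul, ← hSv, mulVec_mulVec,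
          Units.inv_mul, one_mulVec]
      intro a
      simpa [mulVec_single_one] using congrFun hA₁ a.succ
    obtain ⟨R, hR⟩ := exists_isUpperTriangular_units_conj (A₁.submatrix Fin.succ Fin.succ)
    refine ⟨S * Units.map blockDiagOne R, ?_⟩
    have hconj : (S * Units.map blockDiagOne R)⁻¹.val * A * (S * Units.map blockDiagOne R).val
        = blockDiagOne R⁻¹.val * A₁ * blockDiagOne R.val := by
      simp [A₁, Matrix.mul_assoc]
    rw [hconj]
    exact isUpperTriangular_blockDiagOne_mul_mul hcol hR

theorem IsUpperTriangular.exists_diag_eq {T : Matrix (Fin (k + 1)) (Fin (k + 1)) K}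
    (hT : T.IsUpperTriangular) (hT0 : T 0 0 = 0) {lam : Fin (k + 1) → K}
    (h : T.charpoly = Polynomial.X *
      ∏ j ∈ Finset.univ.erase 0, (Polynomial.X - Polynomial.C (lam j)))
    (a : Fin k) : ∃ b : Fin k, T a.succ a.succ = lam b.succ := by
  rw [charpoly_of_isUpperTriangular _ hT, Fin.prod_univ_succ, hT0, map_zero, sub_zero] at h
  have h' := congrArg (Polynomial.eval (T a.succ a.succ))
    (mul_left_cancel₀ Polynomial.X_ne_zero h)
  rw [Polynomial.eval_prod, Polynomial.eval_prod,
    Finset.prod_eq_zero (Finset.mem_univ a) (by simp)] at h'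
  obtain ⟨j, hj, hzero⟩ := Finset.prod_eq_zero_iff.mp h'.symm
  obtain ⟨b, rfl⟩ := Fin.exists_succ_eq.mpr (Finset.mem_erase.mp hj).1
  exact ⟨b, sub_eq_zero.mp (by simpa using hzero)⟩

end Matrix

namespace MvPolynomial

variable {σ R : Type*} [CommSemiring R]

noncomputable def linearForm [Fintype σ] (c : σ → R) : MvPolynomial σ R := ∑ i, c i • X i

/-- `linearSubst A F` is the polynomial `x ↦ F (A x)`. -/
noncomputable def linearSubst [Fintype σ] (A : Matrix σ σ R) :
    MvPolynomial σ R →ₐ[R] MvPolynomial σ R :=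
  aeval fun k => linearForm (A k)

/-- The derivation `F ↦ ⟨∇F, A x⟩`. -/
noncomputable def linearVectorField [Fintype σ] [DecidableEq σ] (A : Matrix σ σ R) :
    Derivation R (MvPolynomial σ R) (MvPolynomial σ R) :=
  ∑ j, linearForm (A j) • pderiv j

section Fintype

variable [Fintype σ]

theorem linearForm_vecMul (c : σ → R) (A : Matrix σ σ R) :
    linearForm (c ᵥ* A) = ∑ k, c k • linearForm (A k) := by
  simp only [linearForm, Matrix.vecMul, dotProduct, Finset.smul_sum, smul_smul, Finset.sum_smul]
  exact Finset.sum_comm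

theorem linearSubst_X (A : Matrix σ σ R) (k : σ) : linearSubst A (X k) = linearForm (A k) :=
  aeval_X _ _

theorem linearSubst_linearForm (A : Matrix σ σ R) (c : σ → R) :
    linearSubst A (linearForm c) = linearForm (c ᵥ* A) := by
  rw [linearForm_vecMul, linearForm]
  simp [linearSubst_X]

theorem linearSubst_linearSubst (A B : Matrix σ σ R) (p : MvPolynomial σ R) :
    linearSubst A (linearSubst B p) = linearSubst (B * A) p := by
  rw [← AlgHom.comp_apply]
  congr 1
  refine algHom_ext fun k => ?_
  simp [linearSubst_X, linearSubst_linearForm, Matrix.mul_apply_eq_vecMul]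

variable [DecidableEq σ]

theorem linearSubst_one : linearSubst (1 : Matrix σ σ R) = AlgHom.id R _ := by
  refine algHom_ext fun k => ?_
  simp [linearSubst_X, linearForm, Matrix.one_apply]

theorem linearSubst_eq_self_of_vars_subset {A : Matrix σ σ R} {z : σ} (hA : A z = Pi.single z 1)
    {p : MvPolynomial σ R} (hp : p.vars ⊆ {z}) : linearSubst A p = p := by
  refine hom_congr_vars (f₁ := (linearSubst A).toRingHom) (f₂ := RingHom.id _) (by ext; simp)
    (fun i hi _ => ?_) rfl
  rw [Finset.mem_singleton.mp (hp hi)]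
  simp [linearSubst_X, hA, linearForm, Pi.single_apply]

theorem linearVectorField_apply (A : Matrix σ σ R) (p : MvPolynomial σ R) :
    linearVectorField A p = ∑ j, linearForm (A j) * pderiv j p := by
  rw [linearVectorField, ← Derivation.coeFnAddMonoidHom_apply, map_sum, Finset.sum_apply]
  simp [Derivation.coeFnAddMonoidHom_apply]

theorem linearVectorField_X (A : Matrix σ σ R) (k : σ) :
    linearVectorField A (X k) = linearForm (A k) := by
  simp [linearVectorField_apply, pderiv_X, Pi.single_apply]

theorem linearVectorField_linearForm (A : Matrix σ σ R) (c : σ → R) :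
    linearVectorField A (linearForm c) = linearForm (c ᵥ* A) := by
  rw [linearForm_vecMul, linearForm]
  simp [linearVectorField_X]

theorem linearVectorField_linearSubst {A M N : Matrix σ σ R} (h : A * M = N * A)
    (p : MvPolynomial σ R) :
    linearVectorField M (linearSubst A p) = linearSubst A (linearVectorField N p) := by
  induction p using MvPolynomial.induction_on with
  | C a => simp
  | add p q hp hq => simp [hp, hq]
  | mul_X p k hp =>
    simp only [map_mul, Derivation.leibniz, hp, smul_eq_mul, map_add, linearSubst_X,
      linearVectorField_X, linearVectorField_linearForm, linearSubst_linearForm,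
      ← Matrix.mul_apply_eq_vecMul, h]

theorem coeff_linearVectorField (A : Matrix σ σ R) (p : MvPolynomial σ R) (m : σ →₀ ℕ) :
    coeff m (linearVectorField A p) = ∑ j, ∑ i, A j i * coeff m (X i * pderiv j p) := by
  simp [linearVectorField_apply, linearForm, Finset.sum_mul, coeff_sum, coeff_smul]

theorem map_linearVectorField {S : Type*} [CommSemiring S] (f : R →+* S) (A : Matrix σ σ R)
    (p : MvPolynomial σ R) :
    map f (linearVectorField A p) = linearVectorField (A.map f) (map f p) := by
  simp [linearVectorField_apply, linearForm, pderiv_map, smul_eq_C_mul]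

end Fintype

variable [DecidableEq σ]

theorem coeff_X_mul_pderiv_self (j : σ) (p : MvPolynomial σ R) (m : σ →₀ ℕ) :
    coeff m (X j * pderiv j p) = m j * coeff m p := by
  rw [coeff_X_mul']
  split_ifs with hj
  · have hj : m j ≠ 0 := Finsupp.mem_support_iff.mp hj
    rw [coeff_pderiv, Finsupp.sub_add_single_one_cancel hj, mul_comm, Finsupp.tsub_apply,
      Finsupp.single_eq_same]
    norm_cast
    rw [Nat.sub_add_cancel (Nat.one_le_iff_ne_zero.mpr hj)]
  · rw [Finsupp.notMem_support_iff.mp hj, Nat.cast_zero, zero_mul]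

theorem coeff_X_mul_pderiv_eq_zero {i j : σ} {p : MvPolynomial σ R} {m : σ →₀ ℕ}
    (h : m i ≠ 0 → coeff (m - Finsupp.single i 1 + Finsupp.single j 1) p = 0) :
    coeff m (X i * pderiv j p) = 0 := by
  rw [coeff_X_mul']
  split_ifs with hi
  · rw [coeff_pderiv, h (Finsupp.mem_support_iff.mp hi), zero_mul]
  · rfl

theorem IsHomogeneous.eq_smul_X_pow_of_vars_subset {H : MvPolynomial σ R} {ℓ : ℕ}
    (hH : H.IsHomogeneous ℓ) {z : σ} (hz : H.vars ⊆ {z}) :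
    H = coeff (Finsupp.single z ℓ) H • X z ^ ℓ := by
  ext m
  rw [coeff_smul, X_pow_eq_monomial, coeff_monomial]
  split_ifs with hm
  · rw [← hm, smul_eq_mul, mul_one]
  rw [smul_zero]
  by_contra hcoeff
  have hmz : m = Finsupp.single z (m z) := Finsupp.support_subset_singleton.mp fun i hi =>
    hz ((mem_vars_iff_mem_support i).mpr ⟨m, mem_support_iff.mpr hcoeff, hi⟩)
  have hdeg := hH hcoeff
  rw [hmz, Finsupp.weight_single, Pi.one_apply, smul_eq_mul, mul_one] at hdeg
  exact hm (by rw [hmz, hdeg])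

variable {K : Type*} [Field K] {k : ℕ}

theorem vars_subset_of_linearVectorField_eq_zero_of_isUpperTriangular
    {T : Matrix (Fin (k + 1)) (Fin (k + 1)) K} (hT : T.IsUpperTriangular)
    (hrow : ∀ i, T 0 i = 0) (hres : NonResonant fun a : Fin k => T a.succ a.succ)
    {G : MvPolynomial (Fin (k + 1)) K} (hG : linearVectorField T G = 0) : G.vars ⊆ {0} := by
  let weight : (Fin (k + 1) →₀ ℕ) →+ ℕ := Finsupp.weight fun i : Fin (k + 1) => (i : ℕ)
  suffices h : ∀ N, ∀ m, weight m = N → (∃ j ≠ 0, m j ≠ 0) → coeff m G = 0 by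
    intro i hi
    obtain ⟨m, hm, hi⟩ := (mem_vars_iff_mem_support i).mp hi
    by_contra hi0
    exact mem_support_iff.mp hm (h _ m rfl ⟨i, by simpa using hi0, Finsupp.mem_support_iff.mp hi⟩)
  -- An off-diagonal entry `T j i ≠ 0` has `0 < j < i`: it links the coefficient at `m` to the one
  -- at `m - eᵢ + eⱼ`, of smaller weight and still involving the variable `j ≠ 0`.
  intro N
  induction N using Nat.strong_induction_on with
  | _ N ih =>
  rintro m rfl ⟨j₀, hj₀, hmj₀⟩
  have hterm : ∀ j i, T j i * coeff m (X i * pderiv j G)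
      = if i = j then (m j * T j j) * coeff m G else 0 := by
    intro j i
    rcases eq_or_ne i j with rfl | hij
    · rw [if_pos rfl, coeff_X_mul_pderiv_self]; ring
    rw [if_neg hij]
    by_cases hTji : T j i = 0
    · rw [hTji, zero_mul]
    have hji : (j : ℕ) < i := lt_of_le_of_ne (not_lt.mp fun h => hTji (hT h))
      (fun h => hij (Fin.ext h).symm)
    have hj : j ≠ 0 := by rintro rfl; exact hTji (hrow i)
    rw [coeff_X_mul_pderiv_eq_zero fun hmi => ?_, mul_zero]
    refine ih _ ?_ _ rfl ⟨j, hj, by simp⟩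
    have := Finsupp.weight_sub_single_add (w := fun i : Fin (k + 1) => (i : ℕ)) hmi
    simp only [weight, map_add, Finsupp.weight_single, one_smul] at this ⊢
    omega
  have hcoeff : (∑ j, m j * T j j) * coeff m G = 0 := by
    rw [← coeff_zero m, ← hG, coeff_linearVectorField, Finset.sum_mul]
    simp [hterm]
  refine (mul_eq_zero.mp hcoeff).resolve_left ?_
  rw [Fin.sum_univ_succ, hrow, mul_zero, zero_add]
  refine hres (fun a => m a.succ) (Function.ne_iff.mpr ?_)
  obtain ⟨a, rfl⟩ := Fin.exists_succ_eq.mpr hj₀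
  exact ⟨a, hmj₀⟩

theorem vars_subset_of_linearVectorField_eq_zero [IsAlgClosed K]
    {A : Matrix (Fin (k + 1)) (Fin (k + 1)) K} (hrow : ∀ i, A 0 i = 0) (hcol : ∀ j, A j 0 = 0)
    {lam : Fin (k + 1) → K}
    (hchar : A.charpoly = Polynomial.X *
      ∏ j ∈ Finset.univ.erase 0, (Polynomial.X - Polynomial.C (lam j)))
    (hres : NonResonant fun b : Fin k => lam b.succ)
    {F : MvPolynomial (Fin (k + 1)) K} (hF : linearVectorField A F = 0) : F.vars ⊆ {0} := by
  obtain ⟨R, hR⟩ := exists_isUpperTriangular_units_conj (A.submatrix Fin.succ Fin.succ)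
  set P := Units.map blockDiagOne R
  set T := P⁻¹.val * A * P.val
  have hT : T.IsUpperTriangular :=
    isUpperTriangular_blockDiagOne_mul_mul (fun a => hcol a.succ) hR
  have hTrow : ∀ i, T 0 i = 0 := fun i => by simp [T, P, mul_apply, Fin.sum_univ_succ, hrow]
  choose ψ hψ using hT.exists_diag_eq (hTrow 0) (by simpa [T] using hchar)
  have hTres : NonResonant fun a : Fin k => T a.succ a.succ := by
    simpa [Function.comp_def, hψ] using hres.comp ψ
  have hG : linearVectorField T (linearSubst P F) = 0 := by
    rw [linearVectorField_linearSubst (N := A) (by simp [T, ← Matrix.mul_assoc]), hF, map_zero]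
  have hvars := vars_subset_of_linearVectorField_eq_zero_of_isUpperTriangular hT hTrow hTres hG
  calc F.vars = (linearSubst P⁻¹.val (linearSubst P F)).vars := by
        simp [linearSubst_linearSubst, linearSubst_one]
    _ = (linearSubst P F).vars := by
        rw [linearSubst_eq_self_of_vars_subset (by simp [P, blockDiagOne_zero]) hvars]
    _ ⊆ {0} := hvars

end MvPolynomial

/-- if a homogeneous polynomial H_ℓ(u₁,v) of degree ℓ satisfies
⟨∂_v H_ℓ, Cv⟩ ≡ 0, where the eigenvalues λ₂,…,λₙ of C are non-resonant, then
H_ℓ = a·u₁^ℓ.  Index 0 stands for u₁ and C is extended by a zero row and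
column at index 0; ⟨∂_v H, Cv⟩ = Σ_{j≠0} (Σ_{i≠0} C j i · x_i) ∂H/∂x_j. -/
theorem stmt15 (n ℓ : ℕ) (hn : 1 ≤ n)
    (C : Matrix (Fin n) (Fin n) ℝ)
    (hCrow : ∀ i, C ⟨0, hn⟩ i = 0) (hCcol : ∀ j, C j ⟨0, hn⟩ = 0)
    (lam : Fin n → ℂ)
    -- λ₂,…,λₙ are the (possibly complex) eigenvalues of C
    (hchar : C.charpoly.map (algebraMap ℝ ℂ) = Polynomial.X *
      ∏ j ∈ Finset.univ.erase ⟨0, hn⟩, (Polynomial.X - Polynomial.C (lam j)))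
    -- non-resonance of (λ₂,…,λₙ)
    (hres : ∀ ms : Fin n → ℕ, ms ⟨0, hn⟩ = 0 → 1 ≤ ∑ i, ms i →
      ∑ i, (ms i : ℂ) * lam i ≠ 0)
    (H : MvPolynomial (Fin n) ℝ) (hH : H.IsHomogeneous ℓ)
    (hker : ∑ j : Fin n, (∑ i : Fin n, C j i • X i) * pderiv j H = 0) :
    ∃ a : ℝ, H = a • (X ⟨0, hn⟩) ^ ℓ := by
  obtain ⟨k, rfl⟩ : ∃ k, n = k + 1 := ⟨n - 1, by omega⟩
  have hz : (⟨0, hn⟩ : Fin (k + 1)) = 0 := rfl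
  rw [hz] at hCrow hCcol hchar hres ⊢
  have hkerC : linearVectorField (C.map (algebraMap ℝ ℂ)) (map (algebraMap ℝ ℂ) H) = 0 :=
    (map_linearVectorField _ C H).symm.trans
      (by rw [(linearVectorField_apply C H).trans hker, map_zero])
  have hvars := vars_subset_of_linearVectorField_eq_zero (fun i => by simp [hCrow])
    (fun j => by simp [hCcol]) (by rw [charpoly_map, hchar]) (nonResonant_succ hres) hkerC
  rw [vars_map_of_injective _ (algebraMap ℝ ℂ).injective] at hvars
  exact ⟨_, hH.eq_smul_X_pow_of_vars_subset hvars⟩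
end

section
/- Suppose the analytic system ẋ = Ax + f(x) on ℝⁿ, with f = O(‖x‖²), has eigenvalues λ₁ = 0 and λ₂,...,λₙ all with positive real part (or all with negative real part), and admits an analytic first integral H(x) = x₁ + h(x) with h = O(‖x‖²) near the origin. Then the origin is not an isolated singular point: there is an analytic curve of singular points through the origin. (Proof: take new coordinates u₁ = H(x), v = (x₂,...,xₙ); then u̇₁ ≡ 0, and the implicit function theorem applied to v̇ = Bv + higher order gives a curve of singular points.) -/
/-!
Write `F x = A x + f x`. Differentiating the identity `dH(x) (F x) = 0` at the zero `0` of `F`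
gives `dH(0) ∘ A = 0`, so the first row of `A` vanishes and `charpoly A = X · charpoly B` for the
lower-right block `B`; as `λ₂, …, λₙ ≠ 0`, `B` is invertible. Consequently
`Ψ x = F x + H x • e₁` has invertible derivative `A + e₁ ⊗ dH(0)` at `0`, and by the analytic
inverse function theorem `γ t = Ψ⁻¹ (t • e₁)` is an analytic curve. Along it `F (γ t)` is a
multiple of `e₁`, and since `dH (F) = 0` while `dH (e₁) ≠ 0` near `0`, in fact `F (γ t) = 0` and
`H (γ t) = t`; the latter makes `γ` regular.
-/

open Filter Topology Matrix

namespace Matrix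

open Polynomial Finset

theorem charpoly_eq_X_mul_charpoly_submatrix_succ {R : Type*} [CommRing R] {m : ℕ}
    (A : Matrix (Fin (m + 1)) (Fin (m + 1)) R) (hA : ∀ j, A 0 j = 0) :
    A.charpoly = X * (A.submatrix Fin.succ Fin.succ).charpoly := by
  have hsub : (charmatrix A).submatrix Fin.succ Fin.succ
      = charmatrix (A.submatrix Fin.succ Fin.succ) := by
    ext i j
    rcases eq_or_ne i j with rfl | h
    · simp [charmatrix_apply_eq]
    · simp [h]
  rw [charpoly, charpoly, det_succ_row_zero, Finset.sum_eq_single 0]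
  · simp [charmatrix_apply_eq, hA, Fin.succAbove_zero, hsub]
  · intro j _ hj
    simp [charmatrix_apply_ne _ _ _ (Ne.symm hj), hA]
  · simp

theorem det_submatrix_succ_ne_zero {K L : Type*} [Field K] [Field L] [Algebra K L] {m : ℕ}
    (A : Matrix (Fin (m + 1)) (Fin (m + 1)) K) (hA : ∀ j, A 0 j = 0) (lam : Fin (m + 1) → L)
    (hchar : A.charpoly.map (algebraMap K L) = ∏ i, (X - C (lam i))) (hlam₀ : lam 0 = 0)
    (hlam : ∀ i, i ≠ 0 → lam i ≠ 0) :
    (A.submatrix Fin.succ Fin.succ).det ≠ 0 := by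
  set B := A.submatrix Fin.succ Fin.succ
  have hB : B.charpoly.map (algebraMap K L) = ∏ i ∈ univ.erase 0, (X - C (lam i)) := by
    have h := congrArg (Polynomial.map (algebraMap K L))
      (charpoly_eq_X_mul_charpoly_submatrix_succ A hA)
    rw [Polynomial.map_mul, Polynomial.map_X, hchar, ← mul_prod_erase _ _ (mem_univ 0), hlam₀,
      map_zero, sub_zero] at h
    exact mul_left_cancel₀ X_ne_zero h.symm
  have hB₀ : algebraMap K L (B.charpoly.eval 0) ≠ 0 := by
    rw [← eval_zero_map, hB, eval_prod, prod_ne_zero_iff]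
    intro i hi
    simpa using hlam i (ne_of_mem_erase hi)
  rw [det_eq_sign_charpoly_coeff, coeff_zero_eq_eval_zero]
  exact mul_ne_zero (by simp) fun h => hB₀ (by rw [h, map_zero])

theorem eq_zero_of_mulVec_eq_zero_of_apply_zero {K : Type*} [Field K] {m : ℕ}
    {A : Matrix (Fin (m + 1)) (Fin (m + 1)) K} (hB : (A.submatrix Fin.succ Fin.succ).det ≠ 0)
    {x : Fin (m + 1) → K} (hx : A *ᵥ x = 0) (hx₀ : x 0 = 0) : x = 0 := by
  have htail : A.submatrix Fin.succ Fin.succ *ᵥ Fin.tail x = 0 := by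
    ext i
    simpa [mulVec, dotProduct, Fin.sum_univ_succ, hx₀, Fin.tail] using congrFun hx i.succ
  rw [← Fin.cons_self_tail x, hx₀, eq_zero_of_mulVec_eq_zero hB htail]
  exact cons_zero_zero

end Matrix

section FirstIntegral

variable {𝕜 E G : Type*} [NontriviallyNormedField 𝕜] [NormedAddCommGroup E] [NormedSpace 𝕜 E]
  [NormedAddCommGroup G] [NormedSpace 𝕜 G]

theorem fderiv_comp_eq_zero_of_first_integral {F : E → E} {H : E → G} {L : E →L[𝕜] E} {x₀ : E}
    (hF : HasFDerivAt F L x₀) (hF₀ : F x₀ = 0) (hH : DifferentiableAt 𝕜 (fderiv 𝕜 H) x₀)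
    (hfi : ∀ᶠ x in 𝓝 x₀, fderiv 𝕜 H x (F x) = 0) :
    (fderiv 𝕜 H x₀).comp L = 0 := by
  have h := hH.hasFDerivAt.clm_apply hF
  rw [hF₀, map_zero, add_zero] at h
  exact h.unique ((hasFDerivAt_const 0 x₀).congr_of_eventuallyEq hfi)

theorem AnalyticAt.exists_curve_map_eq_smul [CompleteSpace 𝕜] [CompleteSpace E] {Ψ : E → E}
    {T : E ≃L[𝕜] E} (hΨ : AnalyticAt 𝕜 Ψ 0) (hΨ' : fderiv 𝕜 Ψ 0 = T) (hΨ₀ : Ψ 0 = 0) (e : E) :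
    ∃ γ : 𝕜 → E, AnalyticAt 𝕜 γ 0 ∧ γ 0 = 0 ∧ ∀ᶠ t in 𝓝 0, Ψ (γ t) = t • e := by
  have hstrict : HasStrictFDerivAt Ψ (T : E →L[𝕜] E) 0 := hΨ' ▸ hΨ.hasStrictFDerivAt
  set P := hstrict.toOpenPartialHomeomorph Ψ
  have hsrc : (0 : E) ∈ P.source := hstrict.mem_toOpenPartialHomeomorph_source
  have hP : ⇑P = Ψ := hstrict.toOpenPartialHomeomorph_coe
  have hP₀ : P 0 = 0 := hP ▸ hΨ₀
  have hline : Tendsto (fun t : 𝕜 => t • e) (𝓝 0) (𝓝 0) :=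
    (continuous_id.smul continuous_const).tendsto' 0 0 (zero_smul 𝕜 e)
  have hsymm : AnalyticAt 𝕜 P.symm 0 := hP₀ ▸ P.analyticAt_symm' hsrc (hP ▸ hΨ) (hP ▸ hΨ')
  refine ⟨fun t => P.symm (t • e), ?_, ?_, ?_⟩
  · exact hsymm.comp_of_eq (analyticAt_id.smul analyticAt_const) (zero_smul 𝕜 e)
  · simpa [hP₀] using P.left_inv hsrc
  · have := hline.eventually (hP₀ ▸ P.eventually_right_inverse' hsrc)
    simpa [hP] using this

theorem deriv_ne_zero_of_eventually_comp_eq_id {g : E → 𝕜} {γ : 𝕜 → E} {t₀ : 𝕜}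
    (hg : DifferentiableAt 𝕜 g (γ t₀)) (hγ : DifferentiableAt 𝕜 γ t₀)
    (h : ∀ᶠ t in 𝓝 t₀, g (γ t) = t) : deriv γ t₀ ≠ 0 := by
  intro h0
  have hcomp := hg.hasFDerivAt.comp_hasDerivAt t₀ hγ.hasDerivAt
  have h1 : fderiv 𝕜 g (γ t₀) (deriv γ t₀) = 1 :=
    hcomp.unique ((hasDerivAt_id t₀).congr_of_eventuallyEq h)
  simp [h0] at h1

end FirstIntegral

theorem eq_zero_and_eq_of_add_smul_eq_smul {K E : Type*} [Field K] [AddCommGroup E] [Module K E]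
    {φ : E →ₗ[K] K} {v e : E} {a t : K} (hφv : φ v = 0) (hφe : φ e ≠ 0)
    (h : v + a • e = t • e) : v = 0 ∧ a = t := by
  have hv : v = (t - a) • e := by rw [sub_smul, ← h, add_sub_cancel_right]
  have hta : t - a = 0 := by simpa [hv, hφe] using hφv
  exact ⟨by rw [hv, hta, zero_smul], (sub_eq_zero.1 hta).symm⟩

theorem exists_analyticAt_curve_zeros_of_first_integral {𝕜 E : Type*} [NontriviallyNormedField 𝕜]
    [CompleteSpace 𝕜] [NormedAddCommGroup E] [NormedSpace 𝕜 E] [FiniteDimensional 𝕜 E]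
    {F : E → E} {H : E → 𝕜} (hF : AnalyticAt 𝕜 F 0) (hH : AnalyticAt 𝕜 H 0) (hF₀ : F 0 = 0)
    (hH₀ : H 0 = 0) (hfi : ∀ᶠ x in 𝓝 0, fderiv 𝕜 H x (F x) = 0) (hdH : fderiv 𝕜 H 0 ≠ 0)
    (hker : ∀ x, fderiv 𝕜 F 0 x = 0 → fderiv 𝕜 H 0 x = 0 → x = 0) :
    ∃ γ : 𝕜 → E, AnalyticAt 𝕜 γ 0 ∧ γ 0 = 0 ∧ deriv γ 0 ≠ 0 ∧ ∀ᶠ t in 𝓝 0, F (γ t) = 0 := by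
  set ℓ := fderiv 𝕜 H 0
  set L := fderiv 𝕜 F 0
  obtain ⟨v, hv⟩ := DFunLike.ne_iff.1 hdH
  set e := (ℓ v)⁻¹ • v
  have hℓe : ℓ e = 1 := by simp [e, inv_mul_cancel₀ hv]
  have hℓL : ℓ.comp L = 0 :=
    fderiv_comp_eq_zero_of_first_integral hF.differentiableAt.hasFDerivAt hF₀
      hH.fderiv.differentiableAt hfi
  have hΨ : HasFDerivAt (fun x => F x + H x • e) (L + ℓ.smulRight e) 0 :=
    hF.differentiableAt.hasFDerivAt.add (hH.differentiableAt.hasFDerivAt.smul_const e)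
  have hinj : Function.Injective (L + ℓ.smulRight e) := by
    refine (injective_iff_map_eq_zero _).2 fun x hx => ?_
    have hℓx : ℓ x = 0 := by
      simpa [hℓe, ← ContinuousLinearMap.comp_apply, hℓL] using congrArg ℓ hx
    exact hker x (by simpa [hℓx] using hx) hℓx
  have := FiniteDimensional.complete 𝕜 E
  set T := (LinearEquiv.ofInjectiveEndo (L + ℓ.smulRight e : E →ₗ[𝕜] E) hinj)
    |>.toContinuousLinearEquiv
  obtain ⟨γ, hγ, hγ₀, hΨγ⟩ := (hF.add (hH.smul analyticAt_const)).exists_curve_map_eq_smul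
    (T := T) (hΨ.fderiv.trans (by ext; rfl)) (by simp [hF₀, hH₀]) e
  have hγlim : Tendsto γ (𝓝 0) (𝓝 0) := hγ₀ ▸ hγ.continuousAt.tendsto
  have hdHe : ∀ᶠ y in 𝓝 0, fderiv 𝕜 H y e ≠ 0 :=
    (hH.fderiv.continuousAt.clm_apply continuousAt_const).eventually_ne (by simp [ℓ, hℓe])
  have hcurve : ∀ᶠ t in 𝓝 0, F (γ t) = 0 ∧ H (γ t) = t := by
    filter_upwards [hΨγ, hγlim.eventually hfi, hγlim.eventually hdHe] with t h₁ h₂ h₃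
    exact eq_zero_and_eq_of_add_smul_eq_smul (φ := (fderiv 𝕜 H (γ t) : E →ₗ[𝕜] 𝕜)) h₂ h₃ h₁
  refine ⟨γ, hγ, hγ₀, ?_, hcurve.mono fun t h => h.1⟩
  exact deriv_ne_zero_of_eventually_comp_eq_id (hγ₀ ▸ hH.differentiableAt) hγ.differentiableAt
    (hcurve.mono fun t h => h.2)

/-- for the analytic system ẋ = Ax + f(x) with eigenvalues
λ₁ = 0 and λ₂,…,λₙ all of positive (or all of negative) real part, if there is
an analytic first integral H(x) = x₁ + h(x), h = O(‖x‖²), near the origin,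
then the origin is a non-isolated singular point: an analytic curve of
singular points passes through it. -/
theorem stmt17 (n : ℕ) (hn : 2 ≤ n)
    (A : Matrix (Fin n) (Fin n) ℝ)
    (f : (Fin n → ℝ) → Fin n → ℝ)
    (hf : AnalyticAt ℝ f 0) (hf0 : f 0 = 0) (hf1 : fderiv ℝ f 0 = 0)
    (lam : Fin n → ℂ)
    -- λ are the eigenvalues of A, λ₁ = 0
    (hchar : A.charpoly.map (algebraMap ℝ ℂ)
      = ∏ i : Fin n, (Polynomial.X - Polynomial.C (lam i)))
    (hlam0 : lam ⟨0, by omega⟩ = 0)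
    (hsign : (∀ i, i ≠ ⟨0, by omega⟩ → 0 < (lam i).re) ∨
             (∀ i, i ≠ ⟨0, by omega⟩ → (lam i).re < 0))
    -- analytic first integral H(x) = x₁ + h(x), h = O(‖x‖²)
    (H : (Fin n → ℝ) → ℝ)
    (hH : AnalyticAt ℝ H 0) (hH0 : H 0 = 0)
    (hHlin : fderiv ℝ H 0 = ContinuousLinearMap.proj ⟨0, by omega⟩)
    (hfi : ∀ᶠ x in nhds (0 : Fin n → ℝ),
      fderiv ℝ H x (A.mulVec x + f x) = 0) :
    ∃ γ : ℝ → Fin n → ℝ, AnalyticAt ℝ γ 0 ∧ γ 0 = 0 ∧ deriv γ 0 ≠ 0 ∧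
      ∀ᶠ t in nhds (0 : ℝ), A.mulVec (γ t) + f (γ t) = 0 := by
  obtain ⟨m, rfl⟩ : ∃ m, n = m + 1 := ⟨n - 1, by omega⟩
  change lam 0 = 0 at hlam0
  change fderiv ℝ H 0 = ContinuousLinearMap.proj 0 at hHlin
  set LA : (Fin (m + 1) → ℝ) →L[ℝ] Fin (m + 1) → ℝ := LinearMap.toContinuousLinearMap A.toLin'
  have hF : HasFDerivAt (fun x => A *ᵥ x + f x) LA 0 := by
    have h := LA.hasFDerivAt.add (hf1 ▸ hf.differentiableAt.hasFDerivAt : HasFDerivAt f 0 0)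
    rwa [add_zero] at h
  have hrow : ∀ j, A 0 j = 0 := fun j => by
    simpa [LA, hHlin] using DFunLike.congr_fun (fderiv_comp_eq_zero_of_first_integral hF
      (by simp [hf0]) hH.fderiv.differentiableAt hfi) (Pi.single j 1)
  have hlam : ∀ i, i ≠ 0 → lam i ≠ 0 := fun i hi h => by
    rcases hsign with hs | hs <;> simpa [h] using hs i hi
  have hB := A.det_submatrix_succ_ne_zero hrow lam hchar hlam0 hlam
  refine exists_analyticAt_curve_zeros_of_first_integral (F := fun x => A *ᵥ x + f x)
    ((LA.analyticAt 0).add hf) hH (by simp [hf0]) hH0 hfi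
    (fun h => by simpa [hHlin] using DFunLike.congr_fun h (Pi.single 0 1)) fun x hAx hx₀ => ?_
  rw [hF.fderiv] at hAx
  rw [hHlin] at hx₀
  exact Matrix.eq_zero_of_mulVec_eq_zero_of_apply_zero hB hAx hx₀
end
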